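/- Let N be a positive integer and let q, t, c ∈ ℂ with |q| < 1, |t| < 1 and |cq| < 1. Then ∑_{n=0}^∞ c^n · [ (t;q)_n / (t;q)_{N+n} − 1 ] = ∑_{n=1}^∞ (q^N;q)_n · t^n / ( (q;q)_n · (1 − cq^n) ). -/

import Mathlib

/-- Finite q-Pochhammer symbol `(x;q)_n = ∏_{k=0}^{n-1} (1 - x q^k)`. -/
noncomputable def qPoch (x q : ℂ) (n : ℕ) : ℂ := ∏ k ∈ Finset.range n, (1 - x * q ^ k)

/-- Infinite q-Pochhammer symbol `(x;q)_∞ = ∏_{k=0}^{∞} (1 - x q^k)`. -/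
noncomputable def qPochInf (x q : ℂ) : ℂ := ∏' k : ℕ, (1 - x * q ^ k)

/-- Gaussian binomial coefficient `[n k]_q`, equal to `0` for `k > n`. -/
noncomputable def gbinom (q : ℂ) (n k : ℕ) : ℂ :=
  if k ≤ n then qPoch q q n / (qPoch q q k * qPoch q q (n - k)) else 0

/-!
Both sides are the double series `∑_{n,m ≥ 0} T(m+1) (c q^{m+1})^n` with
`T(m) = (q^N;q)_m / (q;q)_m · t^m`, summed in the two possible orders. Summing over `n` first
is a geometric series and gives the right-hand side. Summing over `m` first is, by the
`q`-binomial theorem `1 / (x;q)_N = ∑_m (q^N;q)_m / (q;q)_m · x^m` at `x = t q^n`, equal to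
`1 / (t q^n;q)_N - 1 = (t;q)_n / (t;q)_{N+n} - 1`, which gives the left-hand side.
The double series converges absolutely because `‖c q^{m+1}‖ ≤ ‖c q‖ < 1`.
-/

open Filter Topology

section QPochhammer

variable (x q : ℂ)

@[simp]
lemma qPoch_zero : qPoch x q 0 = 1 := Finset.prod_range_zero _

lemma qPoch_succ (n : ℕ) : qPoch x q (n + 1) = qPoch x q n * (1 - x * q ^ n) :=
  Finset.prod_range_succ _ _

lemma qPoch_succ' (n : ℕ) : qPoch x q (n + 1) = (1 - x) * qPoch (x * q) q n := by
  simp only [qPoch, Finset.prod_range_succ', pow_zero, mul_one, pow_succ, mul_assoc, mul_comm]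

lemma qPoch_add (a b : ℕ) : qPoch x q (a + b) = qPoch x q a * qPoch (x * q ^ a) q b := by
  simp only [qPoch, Finset.prod_range_add, pow_add, mul_assoc]

variable {x q}

lemma qPoch_ne_zero (hx : ‖x‖ < 1) (hq : ‖q‖ ≤ 1) (n : ℕ) : qPoch x q n ≠ 0 := by
  refine Finset.prod_ne_zero_iff.2 fun k _ ↦ sub_ne_zero.2 fun h ↦ ?_
  have : ‖x * q ^ k‖ < 1 := by
    rw [norm_mul, norm_pow]
    exact mul_lt_one_of_nonneg_of_lt_one_left (norm_nonneg x) hx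
      (pow_le_one₀ (norm_nonneg q) hq)
  simp [← h] at this

lemma one_sub_pow_succ_ne_zero (hq : ‖q‖ < 1) (m : ℕ) : 1 - q ^ (m + 1) ≠ 0 := by
  refine sub_ne_zero.2 fun h ↦ ?_
  have : ‖q ^ (m + 1)‖ < 1 := by
    rw [norm_pow]; exact pow_lt_one₀ (norm_nonneg q) hq m.succ_ne_zero
  simp [← h] at this

end QPochhammer

noncomputable def qBinomialTerm (a q x : ℂ) (m : ℕ) : ℂ := qPoch a q m / qPoch q q m * x ^ m

section QBinomial

variable {a q x : ℂ}

lemma qBinomialTerm_succ (hq : ‖q‖ < 1) (m : ℕ) :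
    qBinomialTerm a q x (m + 1)
      = qBinomialTerm a q x m * ((1 - a * q ^ m) / (1 - q ^ (m + 1)) * x) := by
  have := qPoch_ne_zero hq hq.le m
  have := one_sub_pow_succ_ne_zero hq m
  simp only [qBinomialTerm, qPoch_succ, ← pow_succ']
  field_simp
  ring

lemma summable_norm_qBinomialTerm (hq : ‖q‖ < 1) (hx : ‖x‖ < 1) :
    Summable fun m ↦ ‖qBinomialTerm a q x m‖ := by
  have hratio : Tendsto (fun m ↦ ‖(1 - a * q ^ m) / (1 - q ^ (m + 1)) * x‖) atTop (𝓝 ‖x‖) := by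
    have hpow := tendsto_pow_atTop_nhds_zero_of_norm_lt_one hq
    have := (((tendsto_const_nhds (x := (1 : ℂ))).sub (hpow.const_mul a)).div
      ((tendsto_const_nhds (x := (1 : ℂ))).sub (hpow.mul_const q)) (by simp)).mul_const x
    simpa [pow_succ] using this.norm
  refine summable_of_ratio_norm_eventually_le (r := (1 + ‖x‖) / 2) (by linarith) ?_
  filter_upwards [hratio.eventually_lt_const (show ‖x‖ < (1 + ‖x‖) / 2 by linarith)] with m hm
  rw [norm_norm, norm_norm, qBinomialTerm_succ hq, norm_mul, mul_comm]
  gcongr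

@[simp]
lemma qBinomialTerm_zero : qBinomialTerm a q x 0 = 1 := by simp [qBinomialTerm]

lemma qBinomialTerm_mul_q_succ (hq : ‖q‖ < 1) (m : ℕ) :
    qBinomialTerm (a * q) q x (m + 1) - qBinomialTerm a q x (m + 1)
      = a * x * qBinomialTerm (a * q) q x m := by
  simp only [qBinomialTerm, qPoch_succ' a, qPoch_succ (a * q), qPoch_succ q q m,
    ← pow_succ']
  have := qPoch_ne_zero hq hq.le m
  have := one_sub_pow_succ_ne_zero hq m
  field_simp
  ring

lemma tsum_qBinomialTerm_eq_mul (hq : ‖q‖ < 1) (hx : ‖x‖ < 1) :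
    ∑' m, qBinomialTerm a q x m = (1 - a * x) * ∑' m, qBinomialTerm (a * q) q x m := by
  have hs₀ := (summable_norm_qBinomialTerm (a := a) hq hx).of_norm
  have hs₁ := (summable_norm_qBinomialTerm (a := a * q) hq hx).of_norm
  have hdiff := (hs₁.sub hs₀).tsum_eq_zero_add
  simp only [qBinomialTerm_mul_q_succ hq, tsum_mul_left, hs₁.tsum_sub hs₀, qBinomialTerm_zero,
    sub_self, zero_add] at hdiff
  linear_combination -hdiff

lemma qPoch_mul_tsum_qBinomialTerm (hq : ‖q‖ < 1) (hx : ‖x‖ < 1) (N : ℕ) :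
    qPoch x q N * ∑' m, qBinomialTerm (q ^ N) q x m = 1 := by
  induction N with
  | zero =>
    rw [qPoch_zero, one_mul, tsum_eq_single 0 fun m hm ↦ ?_, qBinomialTerm_zero]
    obtain ⟨m, rfl⟩ := Nat.exists_eq_succ_of_ne_zero hm
    simp [qBinomialTerm, qPoch_succ']
  | succ N ih =>
    rw [← ih, tsum_qBinomialTerm_eq_mul (a := q ^ N) hq hx, ← pow_succ, qPoch_succ]
    ring

end QBinomial

lemma tsum_tsum_mul_pow_eq_tsum_div {a z : ℕ → ℂ} {r : ℝ} (ha : Summable fun m ↦ ‖a m‖)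
    (hr : r < 1) (hz : ∀ m, ‖z m‖ ≤ r) :
    ∑' n, ∑' m, a m * z m ^ n = ∑' m, a m / (1 - z m) := by
  have hr₀ : 0 ≤ r := (norm_nonneg _).trans (hz 0)
  have hsum : Summable (Function.uncurry fun n m ↦ a m * z m ^ n) := by
    refine .of_norm_bounded ((summable_geometric_of_lt_one hr₀ hr).mul_of_nonneg ha
      (fun _ ↦ by positivity) fun _ ↦ norm_nonneg _) fun ⟨n, m⟩ ↦ ?_
    rw [Function.uncurry_apply_pair, norm_mul, norm_pow, mul_comm]
    gcongr
    exact hz m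
  rw [← hsum.tsum_comm]
  refine tsum_congr fun m ↦ ?_
  rw [tsum_mul_left, tsum_geometric_of_norm_lt_one ((hz m).trans_lt hr), div_eq_mul_inv]

theorem stmt11_general (N : ℕ) (q t c : ℂ) (hq : ‖q‖ < 1)
    (ht : ‖t‖ < 1) (hcq : ‖c * q‖ < 1) :
    ∑' n : ℕ, c ^ n * (qPoch t q n / qPoch t q (N + n) - 1)
      = ∑' n : ℕ, qPoch (q ^ N) q (n + 1) * t ^ (n + 1) /
          (qPoch q q (n + 1) * (1 - c * q ^ (n + 1))) := by
  have hqn (n : ℕ) : ‖q ^ n‖ ≤ 1 := by rw [norm_pow]; exact pow_le_one₀ (norm_nonneg q) hq.le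
  have htq (n : ℕ) : ‖t * q ^ n‖ < 1 := by
    rw [norm_mul]; exact mul_lt_one_of_nonneg_of_lt_one_left (norm_nonneg t) ht (hqn n)
  have hlhs (n : ℕ) : c ^ n * (qPoch t q n / qPoch t q (N + n) - 1)
      = ∑' m, qBinomialTerm (q ^ N) q t (m + 1) * (c * q ^ (m + 1)) ^ n := by
    have hbin := qPoch_mul_tsum_qBinomialTerm hq (htq n) N
    rw [add_comm, qPoch_add, div_mul_cancel_left₀ (qPoch_ne_zero ht hq.le n),
      inv_eq_of_mul_eq_one_right hbin,
      ((summable_norm_qBinomialTerm hq (htq n)).of_norm).tsum_eq_zero_add, qBinomialTerm_zero,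
      add_sub_cancel_left, ← tsum_mul_left]
    exact tsum_congr fun m ↦ by simp only [qBinomialTerm]; ring
  have hnorm (m : ℕ) : ‖c * q ^ (m + 1)‖ ≤ ‖c * q‖ := by
    rw [pow_succ', ← mul_assoc, norm_mul (c * q)]
    exact mul_le_of_le_one_right (norm_nonneg _) (hqn m)
  rw [tsum_congr hlhs, tsum_tsum_mul_pow_eq_tsum_div
    ((summable_nat_add_iff 1).2 (summable_norm_qBinomialTerm hq ht)) hcq hnorm]
  exact tsum_congr fun m ↦ by rw [qBinomialTerm, div_mul_eq_mul_div, div_div]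

theorem stmt11 (N : ℕ) (hN : 1 ≤ N) (q t c : ℂ) (hq : ‖q‖ < 1)
    (ht : ‖t‖ < 1) (hcq : ‖c * q‖ < 1) :
    ∑' n : ℕ, c ^ n * (qPoch t q n / qPoch t q (N + n) - 1)
      = ∑' n : ℕ, qPoch (q ^ N) q (n + 1) * t ^ (n + 1) /
          (qPoch q q (n + 1) * (1 - c * q ^ (n + 1))) :=
  stmt11_general N q t c hq ht hcq
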